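/- arXiv:1904.07457 — 2 statements merged into one kernel-verified Lean document; each statement's English description precedes it below -/
import Mathlib

section
/- Let (s_k)_{k≥1} be i.i.d. random variables taking values in a measurable space S, let (g_k)_{k≥1} be i.i.d. standard Gaussian real random variables independent of (s_k), let h_1, …, h_m : S → ℝ be bounded measurable functions, and let c_1, …, c_m ∈ ℝ. Then (1/√H) Σ_{k=1}^H g_k · (Σ_{i=1}^m c_i h_i(s_k)) converges in distribution, as H → ∞, to a Gaussian distribution with mean 0 and variance Σ_{i=1}^m Σ_{j=1}^m c_i c_j E[h_i(s_1) h_j(s_1)]. (This gives convergence of every finite linear combination of the network outputs at positions t_1, …, t_m to the corresponding Gaussian, the finite-dimensional Gaussian-process limit.) -/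
/-!
Conditionally on the features `s`, the sum `H^{-1/2} ∑_{k<H} gₖ a(sₖ)` with `a = ∑ᵢ cᵢ hᵢ` is a
centred Gaussian of variance `W_H = H⁻¹ ∑_{k<H} a(sₖ)²`, so its expectation against `f` is
`E[G(W_H)]` with `G v = ∫ f dN(0, v)`. The function `G` is bounded and continuous, and by the strong
law of large numbers `W_H → E[a(s₀)²] = ∑ᵢ ∑ⱼ cᵢ cⱼ E[hᵢ(s₀) hⱼ(s₀)]` almost surely, so dominated
convergence concludes.
-/

open MeasureTheory ProbabilityTheory Filter Topology NNReal BoundedContinuousFunction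

namespace ProbabilityTheory

lemma gaussianReal_toNNReal_eq_map_sqrt_mul (v : ℝ) :
    gaussianReal 0 v.toNNReal = (gaussianReal 0 1).map (√v * ·) := by
  rw [gaussianReal_map_const_mul, mul_zero, mul_one]
  congr
  ext
  simp [Real.sq_sqrt', Real.coe_toNNReal']

lemma continuous_integral_gaussianReal_toNNReal (f : ℝ →ᵇ ℝ) :
    Continuous fun v : ℝ => ∫ x, f x ∂gaussianReal 0 v.toNNReal := by
  simp_rw [gaussianReal_toNNReal_eq_map_sqrt_mul,
    integral_map (measurable_const_mul _).aemeasurable f.continuous.aestronglyMeasurable]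
  exact continuous_of_dominated (bound := fun _ => ‖f‖)
    (fun v => (f.continuous.comp (continuous_const_mul _)).aestronglyMeasurable)
    (fun v => ae_of_all _ fun y => f.norm_coe_le_norm _) (integrable_const _)
    (ae_of_all _ fun y => f.continuous.comp (Real.continuous_sqrt.mul continuous_const))

lemma map_sum_mul_eq_gaussianReal {ι Ω : Type*} [MeasurableSpace Ω] {μ : Measure Ω}
    [IsProbabilityMeasure μ] {g : ι → Ω → ℝ} (hg_meas : ∀ k, Measurable (g k))
    (hg_indep : iIndepFun g μ) (hg_gauss : ∀ k, μ.map (g k) = gaussianReal 0 1)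
    (b : ι → ℝ) (s : Finset ι) :
    μ.map (fun ω => ∑ k ∈ s, b k * g k ω) = gaussianReal 0 (∑ k ∈ s, b k ^ 2).toNNReal := by
  classical
  induction s using Finset.induction_on with
  | empty => simp
  | insert i s hi ih =>
    have hterm : μ.map (fun ω => b i * g i ω) = gaussianReal 0 (.mk (b i ^ 2) (sq_nonneg _)) := by
      rw [← Function.comp_def (b i * ·), ← Measure.map_map (measurable_const_mul _) (hg_meas i),
        hg_gauss i, gaussianReal_map_const_mul, mul_zero, mul_one]
    have hindep : IndepFun (fun ω => ∑ k ∈ s, b k * g k ω) (fun ω => b i * g i ω) μ := by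
      have hbg_indep := hg_indep.comp (fun k x => b k * x) fun k => measurable_const_mul _
      simpa only [Finset.sum_fn, Function.comp_def] using
        hbg_indep.indepFun_finsetSum_of_notMem (fun k => (hg_meas k).const_mul _) hi
    simp_rw [Finset.sum_insert hi, add_comm (b i * _)]
    rw [← Pi.add_def, gaussianReal_add_gaussianReal_of_indepFun hindep ih hterm, add_zero]
    congr
    ext
    rw [NNReal.coe_add, NNReal.coe_mk,
      Real.coe_toNNReal _ (Finset.sum_nonneg fun k _ => sq_nonneg _),
      Real.coe_toNNReal _ (add_nonneg (sq_nonneg _) (Finset.sum_nonneg fun k _ => sq_nonneg _)),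
      add_comm]

lemma IndepFun.integral_comp_eq_integral_integral {Ω α β : Type*} [MeasurableSpace Ω]
    [MeasurableSpace α] [MeasurableSpace β] {μ : Measure Ω} [IsFiniteMeasure μ]
    {X : Ω → α} {Y : Ω → β} (hX : Measurable X) (hY : Measurable Y) (hXY : IndepFun X Y μ)
    {F : α × β → ℝ} (hF : StronglyMeasurable F)
    (hF_int : Integrable F ((μ.map X).prod (μ.map Y))) :
    ∫ ω, F (X ω, Y ω) ∂μ = ∫ ω, ∫ ω', F (X ω, Y ω') ∂μ ∂μ := by
  have hlaw : μ.map (fun ω => (X ω, Y ω)) = (μ.map X).prod (μ.map Y) :=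
    (indepFun_iff_map_prod_eq_prod_map_map hX.aemeasurable hY.aemeasurable).mp hXY
  rw [← integral_map (hX.prodMk hY).aemeasurable hF.aestronglyMeasurable, hlaw,
    integral_prod _ hF_int,
    integral_map hX.aemeasurable hF.integral_prod_right'.aestronglyMeasurable]
  refine integral_congr_ae (ae_of_all _ fun ω => ?_)
  exact integral_map hY.aemeasurable
    (hF.comp_measurable measurable_prodMk_left).aestronglyMeasurable

lemma integral_comp_sum_mul_gaussian_of_indepFun {Ω T ι : Type*} [MeasurableSpace Ω]
    [MeasurableSpace T] {μ : Measure Ω} [IsProbabilityMeasure μ] {X : Ω → T} (hX : Measurable X)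
    {g : ι → Ω → ℝ} (hg_meas : ∀ k, Measurable (g k)) (hg_indep : iIndepFun g μ)
    (hg_gauss : ∀ k, μ.map (g k) = gaussianReal 0 1) (hXg : IndepFun X (fun ω k => g k ω) μ)
    {b : ι → T → ℝ} (hb : ∀ k, Measurable (b k)) (s : Finset ι) (f : ℝ →ᵇ ℝ) :
    ∫ ω, f (∑ k ∈ s, b k (X ω) * g k ω) ∂μ
      = ∫ ω, ∫ x, f x ∂gaussianReal 0 (∑ k ∈ s, b k (X ω) ^ 2).toNNReal ∂μ := by
  have hF : Measurable fun p : T × (ι → ℝ) => f (∑ k ∈ s, b k p.1 * p.2 k) :=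
    f.continuous.measurable.comp <| Finset.measurable_sum _ fun k _ =>
      ((hb k).comp measurable_fst).mul ((measurable_pi_apply k).comp measurable_snd)
  rw [hXg.integral_comp_eq_integral_integral (F := fun p => f (∑ k ∈ s, b k p.1 * p.2 k)) hX
    (measurable_pi_lambda _ hg_meas) hF.stronglyMeasurable
    ((integrable_const ‖f‖).mono' hF.aestronglyMeasurable
      (ae_of_all _ fun _ => f.norm_coe_le_norm _))]
  refine integral_congr_ae (ae_of_all _ fun ω => ?_)
  dsimp only
  rw [← map_sum_mul_eq_gaussianReal hg_meas hg_indep hg_gauss (fun k => b k (X ω)),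
    integral_map (Finset.measurable_sum _ fun k _ => (hg_meas k).const_mul _).aemeasurable
      f.continuous.aestronglyMeasurable]

lemma integral_comp_normalized_sum_mul_gaussian {Ω S : Type*} [MeasurableSpace Ω]
    [MeasurableSpace S] {μ : Measure Ω} [IsProbabilityMeasure μ] {s : ℕ → Ω → S}
    (hs_meas : ∀ k, Measurable (s k)) {g : ℕ → Ω → ℝ} (hg_meas : ∀ k, Measurable (g k))
    (hg_indep : iIndepFun g μ) (hg_gauss : ∀ k, μ.map (g k) = gaussianReal 0 1)
    (hsg_indep : IndepFun (fun ω k => s k ω) (fun ω k => g k ω) μ) {a : S → ℝ}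
    (ha : Measurable a) (f : ℝ →ᵇ ℝ) (H : ℕ) :
    ∫ ω, f (1 / √H * ∑ k ∈ Finset.range H, g k ω * a (s k ω)) ∂μ
      = ∫ ω, ∫ x, f x ∂gaussianReal 0 ((∑ k ∈ Finset.range H, a (s k ω) ^ 2) / H).toNNReal ∂μ := by
  have hsum : ∀ ω, 1 / √H * ∑ k ∈ Finset.range H, g k ω * a (s k ω)
      = ∑ k ∈ Finset.range H, 1 / √H * a (s k ω) * g k ω := fun ω => by
    rw [Finset.mul_sum]
    exact Finset.sum_congr rfl fun k _ => by ring
  have hvar : ∀ ω, ∑ k ∈ Finset.range H, (1 / √H * a (s k ω)) ^ 2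
      = (∑ k ∈ Finset.range H, a (s k ω) ^ 2) / H := fun ω => by
    simp_rw [mul_pow, ← Finset.mul_sum, div_pow, one_pow, Real.sq_sqrt H.cast_nonneg]
    ring
  simpa only [hsum, hvar] using
    integral_comp_sum_mul_gaussian_of_indepFun (measurable_pi_lambda _ hs_meas) hg_meas hg_indep
      hg_gauss hsg_indep (b := fun k σ => 1 / √H * a (σ k))
      (fun k => (ha.comp (measurable_pi_apply k)).const_mul _) (Finset.range H) f

lemma strong_law_ae_comp {Ω S : Type*} [MeasurableSpace Ω] [MeasurableSpace S] {μ : Measure Ω}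
    {s : ℕ → Ω → S} (hs_indep : Pairwise fun i j => IndepFun (s i) (s j) μ)
    (hs_ident : ∀ k, IdentDistrib (s k) (s 0) μ μ) {φ : S → ℝ} (hφ : Measurable φ)
    (hint : Integrable (fun ω => φ (s 0 ω)) μ) :
    ∀ᵐ ω ∂μ, Tendsto (fun n : ℕ => (∑ k ∈ Finset.range n, φ (s k ω)) / n) atTop
      (𝓝 (∫ ω, φ (s 0 ω) ∂μ)) :=
  strong_law_ae_real (fun k ω => φ (s k ω)) hint
    (fun _ _ hij => (hs_indep hij).comp hφ hφ) fun k => (hs_ident k).comp hφ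

lemma integral_sq_sum_mul {Ω ι : Type*} [MeasurableSpace Ω] {μ : Measure Ω} [Fintype ι]
    {Y : ι → Ω → ℝ} (hY : ∀ i j, Integrable (fun ω => Y i ω * Y j ω) μ) (c : ι → ℝ) :
    ∫ ω, (∑ i, c i * Y i ω) ^ 2 ∂μ = ∑ i, ∑ j, c i * c j * ∫ ω, Y i ω * Y j ω ∂μ := by
  have hexpand : ∀ ω, (∑ i, c i * Y i ω) ^ 2 = ∑ i, ∑ j, c i * c j * (Y i ω * Y j ω) := by
    intro ω
    rw [sq, Finset.sum_mul_sum]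
    exact Finset.sum_congr rfl fun i _ => Finset.sum_congr rfl fun j _ => by ring
  simp_rw [hexpand, ← integral_const_mul]
  rw [integral_finsetSum _ fun i _ => integrable_finsetSum _ fun j _ => (hY i j).const_mul _]
  exact Finset.sum_congr rfl fun i _ => integral_finsetSum _ fun j _ => (hY i j).const_mul _

lemma tendsto_integral_comp_of_ae_tendsto {Ω ι : Type*} [MeasurableSpace Ω] {μ : Measure Ω}
    [IsProbabilityMeasure μ] {l : Filter ι} [l.IsCountablyGenerated] {F : ℝ → ℝ}
    (hF : Continuous F) {M : ℝ} (hFM : ∀ x, ‖F x‖ ≤ M) {W : ι → Ω → ℝ}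
    (hW : ∀ n, AEStronglyMeasurable (W n) μ) {v : ℝ}
    (hlim : ∀ᵐ ω ∂μ, Tendsto (fun n => W n ω) l (𝓝 v)) :
    Tendsto (fun n => ∫ ω, F (W n ω) ∂μ) l (𝓝 (F v)) := by
  simpa using tendsto_integral_filter_of_dominated_convergence (fun _ => M)
    (Eventually.of_forall fun n => hF.comp_aestronglyMeasurable (hW n))
    (Eventually.of_forall fun n => ae_of_all _ fun ω => hFM _) (integrable_const M)
    (hlim.mono fun ω hω => (hF.tendsto v).comp hω)

end ProbabilityTheory

/-- **finite-dimensional Gaussian limit.** If `(sₖ)` are i.i.d. random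
elements of `S`, `(gₖ)` are i.i.d. standard Gaussians independent of `(sₖ)`,
`h₁, …, h_m : S → ℝ` are bounded measurable and `c₁, …, c_m ∈ ℝ`, then
`H^{-1/2} ∑_{k<H} gₖ (∑ᵢ cᵢ hᵢ(sₖ))` converges in distribution to
`N(0, ∑ᵢ ∑ⱼ cᵢ cⱼ E[hᵢ(s₁) hⱼ(s₁)])`: for every bounded continuous test function
`f`, the expectations converge to the Gaussian integral. -/
theorem random_feature_linear_combination_tendsto_gaussian
    {Ω S : Type*} [MeasurableSpace Ω] [MeasurableSpace S]
    (μ : Measure Ω) [IsProbabilityMeasure μ]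
    (s : ℕ → Ω → S) (g : ℕ → Ω → ℝ)
    (hs_meas : ∀ k, Measurable (s k))
    (hs_indep : iIndepFun s μ)
    (hs_ident : ∀ k, Measure.map (s k) μ = Measure.map (s 0) μ)
    (hg_meas : ∀ k, Measurable (g k))
    (hg_indep : iIndepFun g μ)
    (hg_gauss : ∀ k, Measure.map (g k) μ = gaussianReal 0 1)
    (hsg_indep : IndepFun (fun ω k => s k ω) (fun ω k => g k ω) μ)
    (m : ℕ) (h : Fin m → S → ℝ) (hh_meas : ∀ i, Measurable (h i))
    (C : ℝ) (hh_bdd : ∀ i x, |h i x| ≤ C)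
    (c : Fin m → ℝ) :
    ∀ f : BoundedContinuousFunction ℝ ℝ,
      Tendsto
        (fun H : ℕ =>
          ∫ ω, f ((1 / Real.sqrt H) *
            ∑ k ∈ Finset.range H, g k ω * (∑ i : Fin m, c i * h i (s k ω))) ∂μ)
        atTop
        (𝓝 (∫ x, f x ∂(gaussianReal 0
          (∑ i : Fin m, ∑ j : Fin m,
            c i * c j * ∫ ω, h i (s 0 ω) * h j (s 0 ω) ∂μ).toNNReal))) := by
  intro f
  set a : S → ℝ := fun x => ∑ i, c i * h i x
  have ha_meas : Measurable a := Finset.measurable_sum _ fun i _ => (hh_meas i).const_mul _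
  have hh_memLp : ∀ i, MemLp (fun ω => h i (s 0 ω)) 2 μ := fun i =>
    memLp_of_bounded (ae_of_all _ fun ω => abs_le.mp (hh_bdd i (s 0 ω)))
      ((hh_meas i).comp (hs_meas 0)).aestronglyMeasurable 2
  have ha_memLp : MemLp (fun ω => a (s 0 ω)) 2 μ :=
    memLp_finsetSum _ fun i _ => (hh_memLp i).const_mul (c i)
  have hlln := strong_law_ae_comp (fun i j hij => hs_indep.indepFun hij)
    (fun k => ⟨(hs_meas k).aemeasurable, (hs_meas 0).aemeasurable, hs_ident k⟩)
    (ha_meas.pow_const 2) ha_memLp.integrable_sq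
  have hW_meas : ∀ H : ℕ, AEStronglyMeasurable
      (fun ω => (∑ k ∈ Finset.range H, a (s k ω) ^ 2) / H) μ := fun H =>
    ((Finset.measurable_sum _ fun k _ =>
      (ha_meas.comp (hs_meas k)).pow_const 2).div_const _).aestronglyMeasurable
  rw [← integral_sq_sum_mul (fun i j => (hh_memLp i).integrable_mul (hh_memLp j)) c]
  exact (tendsto_integral_comp_of_ae_tendsto (continuous_integral_gaussianReal_toNNReal f)
    (fun v => f.norm_integral_le_norm _) hW_meas hlln).congr fun H =>
      (integral_comp_normalized_sum_mul_gaussian hs_meas hg_meas hg_indep hg_gauss hsg_indep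
        ha_meas f H).symm
end

section
/- (Theorem 1, almost-sure kernel convergence.) Let x : ℤ → ℝ be a process that is wide-sense stationary with mean zero and covariance function K satisfying K(0) > 0, and let x(1,·), x(2,·), … be i.i.d. copies of x (the channels). Fix a window size d ≥ 1 and positions t_1, t_2 ∈ ℤ, write r = t_2 − t_1, and let X̄_c(t) ∈ ℝ^{cd} be the concatenation of the window vectors x̄_k(t) over channels k = 1, …, c. Define ρ_c = X̄_c(t_1) · X̄_c(t_2) / (‖X̄_c(t_1)‖ ‖X̄_c(t_2)‖) when both norms are nonzero, and ρ_c = 0 otherwise. Then (2/π) arcsin(ρ_c) converges almost surely, as c → ∞, to (2/π) arcsin( K(r) / K(0) ). -/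
open MeasureTheory ProbabilityTheory Filter Topology

/-- Inner product `X̄_c(t) ⬝ X̄_c(t')` of the stacked window vectors in `ℝ^{cd}`:
the sum over channels `k < c` of the inner products of the window vectors
`(xc k (t), …, xc k (t − d + 1))`. -/
def stackedDot {Ω : Type*} (xc : ℕ → ℤ → Ω → ℝ) (d c : ℕ) (t t' : ℤ) (ω : Ω) : ℝ :=
  ∑ k ∈ Finset.range c, ∑ i ∈ Finset.range d, xc k (t - i) ω * xc k (t' - i) ω

/-- Euclidean norm `‖X̄_c(t)‖` of the stacked window vector. -/
noncomputable def stackedNorm {Ω : Type*} (xc : ℕ → ℤ → Ω → ℝ) (d c : ℕ)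
    (t : ℤ) (ω : Ω) : ℝ :=
  Real.sqrt (stackedDot xc d c t t ω)

/-- Normalized correlation `ρ_c = X̄_c(t₁) ⬝ X̄_c(t₂) / (‖X̄_c(t₁)‖ ‖X̄_c(t₂)‖)` when both
norms are nonzero, and `0` otherwise. -/
noncomputable def stackedCorr {Ω : Type*} (xc : ℕ → ℤ → Ω → ℝ) (d c : ℕ)
    (t₁ t₂ : ℤ) (ω : Ω) : ℝ :=
  if stackedNorm xc d c t₁ ω ≠ 0 ∧ stackedNorm xc d c t₂ ω ≠ 0 then
    stackedDot xc d c t₁ t₂ ω / (stackedNorm xc d c t₁ ω * stackedNorm xc d c t₂ ω)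
  else 0

/-!
Writing `S_c(a, b) = X̄_c(a) ⬝ X̄_c(b)`, the summands `x̄_k(a) ⬝ x̄_k(b)` over channels are
i.i.d. and integrable with mean `d K(a - b)`, so by the strong law of large numbers
`S_c(a, b) / c → d K(a - b)` almost surely. The correlation `ρ_c` is unchanged when all three
inner products are divided by `c`, hence `ρ_c → d K(t₁ - t₂) / (d K(0)) = K(r) / K(0)`, and
`arcsin` is continuous.
-/

section StrongLaw

variable {Ω E : Type*} [MeasurableSpace Ω] [MeasurableSpace E] {μ : Measure Ω}

theorem ProbabilityTheory.IdentDistrib.of_map_eq [NeZero μ] {X Y : Ω → E} (hY : AEMeasurable Y μ)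
    (h : μ.map X = μ.map Y) : IdentDistrib X Y μ μ where
  aemeasurable_fst := AEMeasurable.of_map_ne_zero <| by
    rw [h, Measure.map_ne_zero_iff hY]
    exact NeZero.ne μ
  aemeasurable_snd := hY
  map_eq := h

theorem ae_tendsto_average_comp {Φ : ℕ → Ω → E} {Y : Ω → E} (hindep : iIndepFun Φ μ)
    (hident : ∀ k, IdentDistrib (Φ k) Y μ μ) {g : E → ℝ} (hg : Measurable g)
    (hint : Integrable (g ∘ Y) μ) :
    ∀ᵐ ω ∂μ, Tendsto (fun n : ℕ => (∑ k ∈ Finset.range n, g (Φ k ω)) / n) atTop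
      (𝓝 (∫ ω, g (Y ω) ∂μ)) := by
  have hident_g : ∀ k, IdentDistrib (g ∘ Φ k) (g ∘ Y) μ μ := fun k => (hident k).comp hg
  have := strong_law_ae_real (fun k => g ∘ Φ k) ((hident_g 0).integrable_iff.mpr hint)
    (fun i j hij => (hindep.comp (fun _ => g) fun _ => hg).indepFun hij)
    (fun k => (hident_g k).trans (hident_g 0).symm)
  rwa [(hident_g 0).integral_eq] at this

end StrongLaw

section Windows

def windowDot (d : ℕ) (a b : ℤ) (f : ℤ → ℝ) : ℝ :=
  ∑ i ∈ Finset.range d, f (a - i) * f (b - i)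

theorem measurable_windowDot (d : ℕ) (a b : ℤ) : Measurable (windowDot d a b) :=
  Finset.measurable_sum _ fun _ _ => (measurable_pi_apply _).mul (measurable_pi_apply _)

theorem stackedDot_eq_sum_windowDot {Ω : Type*} (xc : ℕ → ℤ → Ω → ℝ) (d c : ℕ) (a b : ℤ)
    (ω : Ω) : stackedDot xc d c a b ω = ∑ k ∈ Finset.range c, windowDot d a b (xc k · ω) :=
  rfl

variable {Ω : Type*} [MeasurableSpace Ω] {μ : Measure Ω} {x : ℤ → Ω → ℝ}

theorem integrable_windowDot (hL2 : ∀ t, MemLp (x t) 2 μ) (d : ℕ) (a b : ℤ) :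
    Integrable (fun ω => windowDot d a b (x · ω)) μ :=
  integrable_finsetSum _ fun i _ => (hL2 (a - i)).integrable_mul (hL2 (b - i))

theorem integral_windowDot (hL2 : ∀ t, MemLp (x t) 2 μ) {K : ℤ → ℝ}
    (hcov : ∀ t₁ t₂, ∫ ω, x t₁ ω * x t₂ ω ∂μ = K (t₁ - t₂)) (d : ℕ) (a b : ℤ) :
    ∫ ω, windowDot d a b (x · ω) ∂μ = d * K (a - b) := by
  have hint (i : ℕ) : Integrable (fun ω => x (a - i) ω * x (b - i) ω) μ :=
    (hL2 (a - i)).integrable_mul (hL2 (b - i))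
  simp only [windowDot]
  rw [integral_finsetSum _ fun i _ => hint i]
  simp [hcov]

end Windows

theorem ae_tendsto_stackedDot_div
    {Ω : Type*} [MeasurableSpace Ω] {μ : Measure Ω} [IsProbabilityMeasure μ]
    {x : ℤ → Ω → ℝ} {K : ℤ → ℝ} (hL2 : ∀ t, MemLp (x t) 2 μ)
    (hcov : ∀ t₁ t₂, ∫ ω, x t₁ ω * x t₂ ω ∂μ = K (t₁ - t₂))
    {xc : ℕ → ℤ → Ω → ℝ} (hxc_indep : iIndepFun (fun k ω (t : ℤ) => xc k t ω) μ)
    (hxc_copy : ∀ k, Measure.map (fun ω (t : ℤ) => xc k t ω) μ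
      = Measure.map (fun ω (t : ℤ) => x t ω) μ)
    (d : ℕ) (a b : ℤ) :
    ∀ᵐ ω ∂μ, Tendsto (fun c : ℕ => stackedDot xc d c a b ω / c) atTop
      (𝓝 (d * K (a - b))) := by
  have hx : AEMeasurable (fun ω (t : ℤ) => x t ω) μ :=
    aemeasurable_pi_lambda _ fun t => (hL2 t).aestronglyMeasurable.aemeasurable
  have := ae_tendsto_average_comp hxc_indep (fun k => .of_map_eq hx (hxc_copy k))
    (measurable_windowDot d a b) (integrable_windowDot hL2 d a b)
  simpa only [stackedDot_eq_sum_windowDot, integral_windowDot hL2 hcov] using this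

/-- The `else 0` branch of `stackedCorr` is what division by zero gives anyway. -/
theorem stackedCorr_eq_div {Ω : Type*} (xc : ℕ → ℤ → Ω → ℝ) (d c : ℕ) (t₁ t₂ : ℤ) (ω : Ω) :
    stackedCorr xc d c t₁ t₂ ω =
      stackedDot xc d c t₁ t₂ ω / (stackedNorm xc d c t₁ ω * stackedNorm xc d c t₂ ω) := by
  unfold stackedCorr
  split_ifs with h
  · rfl
  · rw [not_and_or, not_not, not_not] at h
    rcases h with h | h <;> simp [h]

theorem div_sqrt_mul_sqrt_eq_of_pos (u v w : ℝ) {n : ℝ} (hn : 0 < n) :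
    u / (√v * √w) = u / n / (√(v / n) * √(w / n)) := by
  rw [Real.sqrt_div' _ hn.le, Real.sqrt_div' _ hn.le, div_mul_div_comm,
    Real.mul_self_sqrt hn.le, div_div_div_cancel_right₀ hn.ne']

theorem tendsto_div_sqrt_mul_sqrt {u v w : ℕ → ℝ} {A B C : ℝ}
    (hu : Tendsto (fun n : ℕ => u n / n) atTop (𝓝 A))
    (hv : Tendsto (fun n : ℕ => v n / n) atTop (𝓝 B))
    (hw : Tendsto (fun n : ℕ => w n / n) atTop (𝓝 C)) (hB : 0 < B) (hC : 0 < C) :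
    Tendsto (fun n => u n / (√(v n) * √(w n))) atTop (𝓝 (A / (√B * √C))) := by
  refine (hu.div (hv.sqrt.mul hw.sqrt) (by positivity)).congr' ?_
  filter_upwards [eventually_gt_atTop 0] with n hn
  exact (div_sqrt_mul_sqrt_eq_of_pos _ _ _ (Nat.cast_pos.mpr hn)).symm

theorem erf_kernel_tendsto_ae_general
    {Ω : Type*} [MeasurableSpace Ω] (μ : Measure Ω) [IsProbabilityMeasure μ]
    (x : ℤ → Ω → ℝ) (K : ℤ → ℝ)
    (hL2 : ∀ t, MemLp (x t) 2 μ)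
    (hcov : ∀ t₁ t₂, ∫ ω, x t₁ ω * x t₂ ω ∂μ = K (t₁ - t₂))
    (hK0 : 0 < K 0)
    (xc : ℕ → ℤ → Ω → ℝ)
    (hxc_indep : iIndepFun (fun k ω (t : ℤ) => xc k t ω) μ)
    (hxc_copy : ∀ k, Measure.map (fun ω (t : ℤ) => xc k t ω) μ
      = Measure.map (fun ω (t : ℤ) => x t ω) μ)
    (d : ℕ) (hd : 1 ≤ d) (t₁ t₂ : ℤ) :
    ∀ᵐ ω ∂μ,
      Tendsto (fun c : ℕ => (2 / Real.pi) * Real.arcsin (stackedCorr xc d c t₁ t₂ ω))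
        atTop (𝓝 ((2 / Real.pi) * Real.arcsin (K (t₂ - t₁) / K 0))) := by
  have hK_symm : K (t₁ - t₂) = K (t₂ - t₁) := by
    simp only [← hcov, mul_comm]
  have hdK0 : 0 < (d : ℝ) * K 0 := mul_pos (by exact_mod_cast hd) hK0
  have hlim : d * K (t₁ - t₂) / (√(d * K 0) * √(d * K 0)) = K (t₂ - t₁) / K 0 := by
    rw [Real.mul_self_sqrt hdK0.le, mul_div_mul_left _ _ (by positivity), hK_symm]
  have hdot := ae_tendsto_stackedDot_div hL2 hcov hxc_indep hxc_copy d
  filter_upwards [hdot t₁ t₂, hdot t₁ t₁, hdot t₂ t₂] with ω h₁₂ h₁₁ h₂₂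
  rw [sub_self] at h₁₁ h₂₂
  have hcorr := tendsto_div_sqrt_mul_sqrt h₁₂ h₁₁ h₂₂ hdK0 hdK0
  simp only [hlim, ← stackedNorm.eq_def, ← stackedCorr_eq_div] at hcorr
  exact ((Real.continuous_arcsin.tendsto _).comp hcorr).const_mul _

/-- **Theorem 1, almost-sure kernel convergence.** For a wide-sense
stationary mean-zero process `x` with covariance `K`, `K(0) > 0`, and i.i.d. channel
copies `xc k`, the sigmoid (erf) kernel `(2/π) arcsin ρ_c` converges almost surely to
`(2/π) arcsin(K(r)/K(0))`, where `r = t₂ − t₁`. -/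
theorem erf_kernel_tendsto_ae
    {Ω : Type*} [MeasurableSpace Ω] (μ : Measure Ω) [IsProbabilityMeasure μ]
    (x : ℤ → Ω → ℝ) (K : ℤ → ℝ)
    (hx_meas : ∀ t, Measurable (x t))
    (hL2 : ∀ t, MemLp (x t) 2 μ)
    (hmean : ∀ t, ∫ ω, x t ω ∂μ = 0)
    (hcov : ∀ t₁ t₂, ∫ ω, x t₁ ω * x t₂ ω ∂μ = K (t₁ - t₂))
    (hK0 : 0 < K 0)
    (xc : ℕ → ℤ → Ω → ℝ)
    (hxc_meas : ∀ k t, Measurable (xc k t))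
    (hxc_indep : iIndepFun (fun k ω (t : ℤ) => xc k t ω) μ)
    (hxc_copy : ∀ k, Measure.map (fun ω (t : ℤ) => xc k t ω) μ
      = Measure.map (fun ω (t : ℤ) => x t ω) μ)
    (d : ℕ) (hd : 1 ≤ d) (t₁ t₂ : ℤ) :
    ∀ᵐ ω ∂μ,
      Tendsto (fun c : ℕ => (2 / Real.pi) * Real.arcsin (stackedCorr xc d c t₁ t₂ ω))
        atTop (𝓝 ((2 / Real.pi) * Real.arcsin (K (t₂ - t₁) / K 0))) :=
  erf_kernel_tendsto_ae_general μ x K hL2 hcov hK0 xc hxc_indep hxc_copy d hd t₁ t₂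
end
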